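/- arXiv:2012.08277 — 5 statements merged into one kernel-verified Lean document; each statement's English description precedes it below -/
import Mathlib

section
/- The hybrid numbers form an associative (but non-commutative) real algebra: for all hybrid numbers x, y, z, (xy)z = x(yz), where hybrid numbers are real combinations a + b·i + c·ε + d·h with i² = -1, ε² = 0, h² = 1, and ih = -hi = ε + i. -/
/-- A hybrid number over a ring `R`: `re + imI·𝐢 + imE·ε + imH·𝐡` with
`𝐢² = -1`, `ε² = 0`, `𝐡² = 1`, `𝐢ε = 1 - 𝐡`, `ε𝐢 = 1 + 𝐡`,
`𝐢𝐡 = ε + 𝐢`, `𝐡𝐢 = -ε - 𝐢`, `ε𝐡 = -ε`, `𝐡ε = ε`. -/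
@[ext]
structure Hybrid (R : Type*) where
  re : R
  imI : R
  imE : R
  imH : R

namespace Hybrid

variable {R : Type*} [Ring R]

instance : Zero (Hybrid R) := ⟨⟨0, 0, 0, 0⟩⟩
instance : One (Hybrid R) := ⟨⟨1, 0, 0, 0⟩⟩
instance : Add (Hybrid R) :=
  ⟨fun x y => ⟨x.re + y.re, x.imI + y.imI, x.imE + y.imE, x.imH + y.imH⟩⟩
instance : Neg (Hybrid R) := ⟨fun x => ⟨-x.re, -x.imI, -x.imE, -x.imH⟩⟩
instance : Sub (Hybrid R) :=
  ⟨fun x y => ⟨x.re - y.re, x.imI - y.imI, x.imE - y.imE, x.imH - y.imH⟩⟩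

/-- Multiplication of hybrid numbers, obtained by bilinear extension of the
multiplication table of the hybrid units (units commute with coefficients). -/
instance : Mul (Hybrid R) := ⟨fun x y =>
  ⟨x.re * y.re - x.imI * y.imI + x.imI * y.imE + x.imE * y.imI + x.imH * y.imH,
   x.re * y.imI + x.imI * y.re + x.imI * y.imH - x.imH * y.imI,
   x.re * y.imE + x.imE * y.re + x.imI * y.imH - x.imH * y.imI
     + x.imH * y.imE - x.imE * y.imH,
   x.re * y.imH + x.imH * y.re + x.imE * y.imI - x.imI * y.imE⟩⟩

instance {S : Type*} [SMul S R] : SMul S (Hybrid R) :=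
  ⟨fun s x => ⟨s • x.re, s • x.imI, s • x.imE, s • x.imH⟩⟩

/-- The hybrid unit `𝐢`. -/
def iu : Hybrid R := ⟨0, 1, 0, 0⟩
/-- The hybrid unit `ε`. -/
def eu : Hybrid R := ⟨0, 0, 1, 0⟩
/-- The hybrid unit `𝐡`. -/
def hu : Hybrid R := ⟨0, 0, 0, 1⟩

end Hybrid

noncomputable section

open Quaternion

/-- Hybrid quaternions: hybrid numbers with quaternion coefficients
(the quaternion units commute with the hybrid units). -/
abbrev HQ := Hybrid (ℍ[ℝ])

/-- The quaternion unit `i` in the hybrid quaternion algebra. -/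
def qi : HQ := ⟨⟨0, 1, 0, 0⟩, 0, 0, 0⟩
/-- The quaternion unit `j` in the hybrid quaternion algebra. -/
def qj : HQ := ⟨⟨0, 0, 1, 0⟩, 0, 0, 0⟩
/-- The quaternion unit `k` in the hybrid quaternion algebra. -/
def qk : HQ := ⟨⟨0, 0, 0, 1⟩, 0, 0, 0⟩

/-- Embedding of the real quaternions into the hybrid quaternions. -/
def eQ (q : ℍ[ℝ]) : HQ := ⟨q, 0, 0, 0⟩
/-- Embedding of the hybrid numbers into the hybrid quaternions. -/
def eH (z : Hybrid ℝ) : HQ :=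
  ⟨⟨z.re, 0, 0, 0⟩, ⟨z.imI, 0, 0, 0⟩, ⟨z.imE, 0, 0, 0⟩, ⟨z.imH, 0, 0, 0⟩⟩

/-- Fibonacci numbers, as real numbers. -/
def F (n : ℕ) : ℝ := Nat.fib n

/-- Lucas numbers, as real numbers. -/
def lucas : ℕ → ℝ
  | 0 => 2
  | 1 => 1
  | n + 2 => lucas (n + 1) + lucas n

/-- The Fibonacci quaternion `F̃ₘ = Fₘ + i F_{m+1} + j F_{m+2} + k F_{m+3}`. -/
def fq (m : ℕ) : ℍ[ℝ] := ⟨F m, F (m + 1), F (m + 2), F (m + 3)⟩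
/-- The Lucas quaternion `L̃ₘ`. -/
def lq (m : ℕ) : ℍ[ℝ] := ⟨lucas m, lucas (m + 1), lucas (m + 2), lucas (m + 3)⟩
/-- The Fibonacci hybrid number `F̆ₘ = Fₘ + 𝐢 F_{m+1} + ε F_{m+2} + 𝐡 F_{m+3}`. -/
def fh (m : ℕ) : Hybrid ℝ := ⟨F m, F (m + 1), F (m + 2), F (m + 3)⟩
/-- The Lucas hybrid number `L̆ₘ`. -/
def lh (m : ℕ) : Hybrid ℝ := ⟨lucas m, lucas (m + 1), lucas (m + 2), lucas (m + 3)⟩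
/-- The Fibonacci hybrid quaternion
`F̂ₙ = F̃ₙ + 𝐢 F̃_{n+1} + ε F̃_{n+2} + 𝐡 F̃_{n+3}
    = F̆ₙ + i F̆_{n+1} + j F̆_{n+2} + k F̆_{n+3}`. -/
def Fhat (n : ℕ) : HQ := ⟨fq n, fq (n + 1), fq (n + 2), fq (n + 3)⟩
/-- The Lucas hybrid quaternion `L̂ₙ`. -/
def Lhat (n : ℕ) : HQ := ⟨lq n, lq (n + 1), lq (n + 2), lq (n + 3)⟩

/-- `α = (1 + √5)/2`. -/
def ga : ℝ := (1 + Real.sqrt 5) / 2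
/-- `β = (1 - √5)/2`. -/
def gb : ℝ := (1 - Real.sqrt 5) / 2

/-- `x* = 1 + 𝐢 x + ε x² + 𝐡 x³` (a hybrid number with real coefficients). -/
def hstar (x : ℝ) : HQ :=
  ⟨1, ⟨x, 0, 0, 0⟩, ⟨x ^ 2, 0, 0, 0⟩, ⟨x ^ 3, 0, 0, 0⟩⟩
/-- `x̲ = 1 + i x + j x² + k x³` (a quaternion with real coefficients). -/
def qund (x : ℝ) : HQ := eQ ⟨1, x, x ^ 2, x ^ 3⟩

lemma hmul_re (x y : Hybrid ℝ) : (x * y).re =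
    x.re * y.re - x.imI * y.imI + x.imI * y.imE + x.imE * y.imI + x.imH * y.imH := rfl
lemma hmul_imI (x y : Hybrid ℝ) : (x * y).imI =
    x.re * y.imI + x.imI * y.re + x.imI * y.imH - x.imH * y.imI := rfl
lemma hmul_imE (x y : Hybrid ℝ) : (x * y).imE =
    x.re * y.imE + x.imE * y.re + x.imI * y.imH - x.imH * y.imI
      + x.imH * y.imE - x.imE * y.imH := rfl
lemma hmul_imH (x y : Hybrid ℝ) : (x * y).imH =
    x.re * y.imH + x.imH * y.re + x.imE * y.imI - x.imI * y.imE := rfl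

/-- hybrid number multiplication is associative. -/
theorem hybrid_mul_assoc (x y z : Hybrid ℝ) : x * y * z = x * (y * z) := by
  ext <;> simp only [hmul_re, hmul_imI, hmul_imE, hmul_imH] <;> ring
end
end

section
/- For n ≥ 1, F̂_n - i·F̂_{n+1} - j·F̂_{n+2} - k·F̂_{n+3} = F̆_n + F̆_{n+2} + F̆_{n+4} + F̆_{n+6} = L̆_{n+1} + L̆_{n+5}, where F̂ denotes Fibonacci hybrid quaternions, F̆ Fibonacci hybrid numbers, and L̆ Lucas hybrid numbers. -/
noncomputable section

open Quaternion

/-! Because the quaternion units commute with the hybrid units, the left-hand side is computed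
coefficientwise in the hybrid basis. Each coefficient has the form
`xₘ - i xₘ₊₁ - j xₘ₊₂ - k xₘ₊₃` with `xₘ = aₘ + i aₘ₊₁ + j aₘ₊₂ + k aₘ₊₃`, and for an arbitrary
sequence `a` the imaginary parts cancel in pairs (the `i`-part is `aₘ₊₁ - aₘ₊₁ - aₘ₊₅ + aₘ₊₅`,
from `jk = i` and `kj = -i`), leaving `aₘ + aₘ₊₂ + aₘ₊₄ + aₘ₊₆`. No Fibonacci recurrence is
needed for the first equality; the second one is `Fₘ + Fₘ₊₂ = Lₘ₊₁`, used twice. -/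

theorem Quaternion.shift_sub_units_mul_shift {R : Type*} [CommRing R] (a : ℕ → R) (m : ℕ) :
    (⟨a m, a (m + 1), a (m + 2), a (m + 3)⟩ : ℍ[R])
        - ⟨0, 1, 0, 0⟩ * ⟨a (m + 1), a (m + 2), a (m + 3), a (m + 4)⟩
        - ⟨0, 0, 1, 0⟩ * ⟨a (m + 2), a (m + 3), a (m + 4), a (m + 5)⟩
        - ⟨0, 0, 0, 1⟩ * ⟨a (m + 3), a (m + 4), a (m + 5), a (m + 6)⟩ =
      ⟨a m + a (m + 2) + a (m + 4) + a (m + 6), 0, 0, 0⟩ := by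
  ext <;> simp

theorem Hybrid.mk_zero_mul {R : Type*} [Ring R] (r : R) (x : Hybrid R) :
    (⟨r, 0, 0, 0⟩ : Hybrid R) * x = ⟨r * x.re, r * x.imI, r * x.imE, r * x.imH⟩ := by
  change Hybrid.mk (r * x.re - 0 * x.imI + 0 * x.imE + 0 * x.imI + 0 * x.imH) _ _ _ = _
  ext <;> simp

theorem eQ_mul (q : ℍ[ℝ]) (x : HQ) : eQ q * x = ⟨q * x.re, q * x.imI, q * x.imE, q * x.imH⟩ :=
  Hybrid.mk_zero_mul q x

theorem Fhat_sub_quaternion_units_mul (n : ℕ) :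
    Fhat n - qi * Fhat (n + 1) - qj * Fhat (n + 2) - qk * Fhat (n + 3) =
      eH (fh n + fh (n + 2) + fh (n + 4) + fh (n + 6)) := by
  -- with the literal `⟨0, 1, 0, 0⟩` instead of `qi.re`, `rw` would see a coefficient of type
  -- `ℍ[ℝ,-1,-1]` rather than `ℍ[ℝ]` and fail to match `eQ_mul`
  rw [show qi = eQ qi.re from rfl, show qj = eQ qj.re from rfl,
    show qk = eQ qk.re from rfl, eQ_mul, eQ_mul, eQ_mul]
  ext1
  · exact Quaternion.shift_sub_units_mul_shift F n
  · exact Quaternion.shift_sub_units_mul_shift F (n + 1)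
  · exact Quaternion.shift_sub_units_mul_shift F (n + 2)
  · exact Quaternion.shift_sub_units_mul_shift F (n + 3)

theorem F_add_F_add_two : ∀ m : ℕ, F m + F (m + 2) = lucas (m + 1)
  | 0 => by norm_num [F, lucas]
  | 1 => by norm_num [F, lucas]
  | m + 2 => by
    rw [lucas, ← F_add_F_add_two (m + 1), ← F_add_F_add_two m]
    simp only [F, Nat.fib_add_two]
    push_cast
    ring

theorem F_alternate_sum_eq_lucas_add_lucas (m : ℕ) :
    F m + F (m + 2) + F (m + 4) + F (m + 6) = lucas (m + 1) + lucas (m + 5) := by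
  rw [← F_add_F_add_two, ← F_add_F_add_two, add_assoc]

theorem fh_alternate_sum_eq_lh_add_lh (n : ℕ) :
    fh n + fh (n + 2) + fh (n + 4) + fh (n + 6) = lh (n + 1) + lh (n + 5) := by
  ext1
  · exact F_alternate_sum_eq_lucas_add_lucas n
  · exact F_alternate_sum_eq_lucas_add_lucas (n + 1)
  · exact F_alternate_sum_eq_lucas_add_lucas (n + 2)
  · exact F_alternate_sum_eq_lucas_add_lucas (n + 3)

theorem fib_hybrid_quaternion_identity_general (n : ℕ) :
    Fhat n - qi * Fhat (n + 1) - qj * Fhat (n + 2) - qk * Fhat (n + 3) =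
        eH (fh n + fh (n + 2) + fh (n + 4) + fh (n + 6)) ∧
      eH (fh n + fh (n + 2) + fh (n + 4) + fh (n + 6)) =
        eH (lh (n + 1) + lh (n + 5)) :=
  ⟨Fhat_sub_quaternion_units_mul n, congrArg eH (fh_alternate_sum_eq_lh_add_lh n)⟩

/-- `F̂ₙ - i F̂_{n+1} - j F̂_{n+2} - k F̂_{n+3}
  = F̆ₙ + F̆_{n+2} + F̆_{n+4} + F̆_{n+6} = L̆_{n+1} + L̆_{n+5}`. -/
theorem fib_hybrid_quaternion_identity (n : ℕ) (hn : 1 ≤ n) :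
    Fhat n - qi * Fhat (n + 1) - qj * Fhat (n + 2) - qk * Fhat (n + 3) =
        eH (fh n + fh (n + 2) + fh (n + 4) + fh (n + 6)) ∧
      eH (fh n + fh (n + 2) + fh (n + 4) + fh (n + 6)) =
        eH (lh (n + 1) + lh (n + 5)) :=
  fib_hybrid_quaternion_identity_general n
end
end

section
/- For n ≥ 2, the Fibonacci and Lucas hybrid quaternions satisfy F̂_{n+2} - F̂_{n-2} = L̂_n. -/
noncomputable section

open Quaternion

/-! Every coordinate of `F̂_m` (resp. `L̂_m`), with respect to both the hybrid and the quaternion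
units, is a Fibonacci (resp. Lucas) number at index `m + a` for a shift `a` independent of `m`, so
the claim reduces to `F_{m+4} - F_m = L_{m+2}`, which follows from `L_{n+1} = F_n + F_{n+2}`. -/

theorem F_add_two (n : ℕ) : F (n + 2) = F (n + 1) + F n := by
  simp only [F, Nat.fib_add_two, Nat.cast_add]
  ring

theorem lucas_add_one_eq_F_add_F (n : ℕ) : lucas (n + 1) = F n + F (n + 2) := by
  induction n using Nat.twoStepInduction with
  | zero => norm_num [lucas, F]
  | one => norm_num [lucas, F, Nat.fib_add_two]
  | more n ih₀ ih₁ =>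
    rw [lucas, ih₀, ih₁]
    simp only [F_add_two, add_assoc, Nat.reduceAdd]
    ring

theorem F_add_four_sub_F (m : ℕ) : F (m + 4) - F m = lucas (m + 2) := by
  rw [lucas_add_one_eq_F_add_F (m + 1), F_add_two (m + 2), F_add_two m]
  ring

theorem fq_add_four_sub_fq (m : ℕ) : fq (m + 4) - fq m = lq (m + 2) := by
  ext
  · exact F_add_four_sub_F m
  · exact F_add_four_sub_F (m + 1)
  · exact F_add_four_sub_F (m + 2)
  · exact F_add_four_sub_F (m + 3)

theorem Fhat_add_four_sub_Fhat (m : ℕ) : Fhat (m + 4) - Fhat m = Lhat (m + 2) :=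
  Hybrid.ext (fq_add_four_sub_fq m) (fq_add_four_sub_fq (m + 1)) (fq_add_four_sub_fq (m + 2))
    (fq_add_four_sub_fq (m + 3))

/-- `F̂_{n+2} - F̂_{n-2} = L̂ₙ` for `n ≥ 2`. -/
theorem fib_lucas_hybrid_quaternion_diff (n : ℕ) (hn : 2 ≤ n) :
    Fhat (n + 2) - Fhat (n - 2) = Lhat n := by
  obtain ⟨m, rfl⟩ := Nat.exists_eq_add_of_le' hn
  simpa using Fhat_add_four_sub_Fhat m
end
end

section
/- The Fibonacci hybrid quaternion satisfies the Binet formula F̂_n = (α*·α̲·αⁿ - β*·β̲·βⁿ)/(α - β), where α = (1+√5)/2, β = (1-√5)/2, α* = 1 + 𝐢α + εα² + 𝐡α³, β* = 1 + 𝐢β + εβ² + 𝐡β³, α̲ = 1 + iα + jα² + kα³, β̲ = 1 + iβ + jβ² + kβ³. -/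
noncomputable section

open Quaternion

/-!
Both sides of the Binet formula are built from a real sequence in the same pattern: with
`(e₀, …, e₃) = (1, 𝐢, ε, 𝐡)` and `(q₀, …, q₃) = (1, i, j, k)`, the coefficient of `eₐ q_b` in
`F̂ₙ` is `F_{n+a+b}`, and the one in `xⁿ x* x̲` is `x^{n+a+b}`, because `x*` has real
coefficients and `x̲` has no hybrid part. The pattern is linear in the sequence, so the
classical Binet formula `Fₘ = (αᵐ - βᵐ)/(α - β)` transfers coefficientwise.
-/

namespace Hybrid

section Mul

variable {R : Type*} [Ring R]

@[simp] theorem mul_re (x y : Hybrid R) : (x * y).re =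
    x.re * y.re - x.imI * y.imI + x.imI * y.imE + x.imE * y.imI + x.imH * y.imH := rfl
@[simp] theorem mul_imI (x y : Hybrid R) : (x * y).imI =
    x.re * y.imI + x.imI * y.re + x.imI * y.imH - x.imH * y.imI := rfl
@[simp] theorem mul_imE (x y : Hybrid R) : (x * y).imE =
    x.re * y.imE + x.imE * y.re + x.imI * y.imH - x.imH * y.imI
      + x.imH * y.imE - x.imE * y.imH := rfl
@[simp] theorem mul_imH (x y : Hybrid R) : (x * y).imH =
    x.re * y.imH + x.imH * y.re + x.imE * y.imI - x.imI * y.imE := rfl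

end Mul

section SMul

variable {R S : Type*} [SMul S R]

@[simp] theorem smul_re (s : S) (x : Hybrid R) : (s • x).re = s • x.re := rfl
@[simp] theorem smul_imI (s : S) (x : Hybrid R) : (s • x).imI = s • x.imI := rfl
@[simp] theorem smul_imE (s : S) (x : Hybrid R) : (s • x).imE = s • x.imE := rfl
@[simp] theorem smul_imH (s : S) (x : Hybrid R) : (s • x).imH = s • x.imH := rfl

end SMul

end Hybrid

def seqQuat (u : ℕ → ℝ) (m : ℕ) : ℍ[ℝ] := ⟨u m, u (m + 1), u (m + 2), u (m + 3)⟩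

def seqHQ (u : ℕ → ℝ) (n : ℕ) : HQ :=
  ⟨seqQuat u n, seqQuat u (n + 1), seqQuat u (n + 2), seqQuat u (n + 3)⟩

theorem Fhat_eq_seqHQ (n : ℕ) : Fhat n = seqHQ F n := rfl

theorem seqHQ_smul_sub (c : ℝ) (u v : ℕ → ℝ) (n : ℕ) :
    seqHQ (c • (u - v)) n = c • (seqHQ u n - seqHQ v n) := rfl

theorem pow_smul_hstar_mul_qund (x : ℝ) (n : ℕ) :
    x ^ n • (hstar x * qund x) = seqHQ (x ^ ·) n := by
  ext <;>
    simp [Quaternion.re_mul, Quaternion.imI_mul, Quaternion.imJ_mul, Quaternion.imK_mul] <;>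
    simp [hstar, qund, eQ, seqHQ, seqQuat] <;>
    ring

theorem F_eq_smul_sub : F = (ga - gb)⁻¹ • ((ga ^ ·) - (gb ^ ·)) := by
  funext m
  simp only [F, Real.coe_fib_eq, Pi.smul_apply, Pi.sub_apply, smul_eq_mul]
  rw [div_eq_inv_mul, ← Real.goldenRatio_sub_goldenConj]
  -- `ga` and `gb` unfold to Mathlib's `Real.goldenRatio` and `Real.goldenConj`
  rfl

/-- Binet formula for Fibonacci hybrid quaternions,
`F̂ₙ = (α* α̲ αⁿ - β* β̲ βⁿ)/(α - β)`. -/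
theorem fib_hybrid_quaternion_binet (n : ℕ) :
    Fhat n =
      (ga - gb)⁻¹ • (ga ^ n • (hstar ga * qund ga) - gb ^ n • (hstar gb * qund gb)) := by
  rw [Fhat_eq_seqHQ, F_eq_smul_sub, seqHQ_smul_sub, pow_smul_hstar_mul_qund,
    pow_smul_hstar_mul_qund]
end
end

section
/- The Lucas hybrid quaternion satisfies the Binet formula L̂_n = α*·α̲·αⁿ + β*·β̲·βⁿ, with α = (1+√5)/2, β = (1-√5)/2, α* = 1 + 𝐢α + εα² + 𝐡α³, β* = 1 + 𝐢β + εβ² + 𝐡β³, α̲ = 1 + iα + jα² + kα³, β̲ = 1 + iβ + jβ² + kβ³. -/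
noncomputable section

open Quaternion

/-!
Index the sixteen coordinates of a hybrid quaternion by a hybrid unit `1, 𝐢, ε, 𝐡` (`a = 0..3`)
and a quaternion unit `1, i, j, k` (`b = 0..3`). The `(a, b)` coordinate of `L̂ₙ` is `L_{n+a+b}`,
and that of `x* x̲` is `xᵃ xᵇ`: `x*` has real coefficients and `x̲` is a quaternion, so no
product of two hybrid units occurs. Both sides of the Binet formula thus depend on `(a, b)` only
through `a + b`, and coordinatewise the claim is the Lucas Binet formula `L_m = αᵐ + βᵐ`.
-/

open scoped goldenRatio
open Real

theorem Hybrid.mul_def {R : Type*} [Ring R] (x y : Hybrid R) : x * y =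
    ⟨x.re * y.re - x.imI * y.imI + x.imI * y.imE + x.imE * y.imI + x.imH * y.imH,
     x.re * y.imI + x.imI * y.re + x.imI * y.imH - x.imH * y.imI,
     x.re * y.imE + x.imE * y.re + x.imI * y.imH - x.imH * y.imI
       + x.imH * y.imE - x.imE * y.imH,
     x.re * y.imH + x.imH * y.re + x.imE * y.imI - x.imI * y.imE⟩ := rfl

def hankelHQ (u : ℕ → ℝ) : HQ :=
  ⟨⟨u 0, u 1, u 2, u 3⟩, ⟨u 1, u 2, u 3, u 4⟩, ⟨u 2, u 3, u 4, u 5⟩, ⟨u 3, u 4, u 5, u 6⟩⟩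

theorem hankelHQ_add (u v : ℕ → ℝ) : hankelHQ (u + v) = hankelHQ u + hankelHQ v := rfl

theorem hankelHQ_smul (c : ℝ) (u : ℕ → ℝ) : hankelHQ (c • u) = c • hankelHQ u := rfl

theorem Lhat_eq_hankelHQ (n : ℕ) : Lhat n = hankelHQ (fun m => lucas (n + m)) := rfl

theorem hstar_mul_qund (x : ℝ) : hstar x * qund x = hankelHQ (x ^ ·) := by
  rw [Hybrid.mul_def]
  ext <;> simp <;> simp [hstar, qund, eQ, hankelHQ] <;> ring

theorem lucas_isSol_fibRec : fibRec.IsSolution lucas := by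
  intro n
  change lucas (n + 2) = ∑ i : Fin 2, ![1, 1] i * lucas (n + i)
  simp [Fin.sum_univ_two, lucas, add_comm]

theorem lucas_eq_goldenRatio_pow_add_goldenConj_pow (n : ℕ) : lucas n = φ ^ n + ψ ^ n := by
  have hsol : fibRec.IsSolution (fun m => φ ^ m + ψ ^ m) :=
    fibRec.solSpace.add_mem geom_goldenRatio_isSol_fibRec geom_goldenConj_isSol_fibRec
  refine congrFun ((fibRec.eq_iff_eqOn_range_order _ _ lucas_isSol_fibRec hsol).2 ?_) n
  intro i hi
  norm_cast at hi
  fin_cases hi <;> norm_num [lucas]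

/-- Binet formula for Lucas hybrid quaternions,
`L̂ₙ = α* α̲ αⁿ + β* β̲ βⁿ`. -/
theorem lucas_hybrid_quaternion_binet (n : ℕ) :
    Lhat n =
      ga ^ n • (hstar ga * qund ga) + gb ^ n • (hstar gb * qund gb) := by
  rw [hstar_mul_qund, hstar_mul_qund, ← hankelHQ_smul, ← hankelHQ_smul, ← hankelHQ_add,
    Lhat_eq_hankelHQ]
  congr 1
  funext m
  rw [lucas_eq_goldenRatio_pow_add_goldenConj_pow]
  simp only [Pi.add_apply, Pi.smul_apply, smul_eq_mul, ga, gb]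
  ring
end
end
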